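/- arXiv:0801.4835 — 2 statements merged into one kernel-verified Lean document; each statement's English description precedes it below -/
import Mathlib

section
/- Let P ⊆ ℝ^d be the intersection of d+1 closed tropical halfspaces. If P is bounded and P is not contained in any tropical hyperplane, then P is the tropical convex hull of some d+1 points of ℝ^d. -/
/-!
The corners `v_k` of `P`, with homogeneous coordinates `max_{x ∈ P} (x_l - x_k)`, generate `P`
tropically: every `x ∈ P` is `min_k (x_k + v_k)` in homogeneous coordinates. It remains to see
that each `v_k` lies in each halfspace `H_m`.

Push `x ∈ P` far along the ray raising its `r`-th homogeneous coordinate; it leaves some `H_m`, and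
then `r` is the only index of `I_m` that can witness `x ∈ H_m`. As `r` ranges over the `d + 1`
coordinates the halfspaces found are distinct, so every `H_m` gets such an index `r_m(x)`. The
conditions defining `r_m(x)` are open and `P` is tropically convex, hence connected, so `r_m` is
constant on `P`. Thus all of `P` satisfies `x_{r_m} - x_j ≤ a_{r_m} - a_j` for `j ∉ I_m`, and the
corners, which maximize these differences over `P`, satisfy it too, i.e. `v_k ∈ H_m`.
-/

open Set

noncomputable section

/-- Extended (homogeneous) coordinates of a point of `TA^d ≅ ℝ^d`:
the 0-th coordinate is normalized to `0`. -/
def ext {d : ℕ} (x : Fin d → ℝ) : Fin (d + 1) → ℝ := Fin.cons 0 x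

/-- The tropical combination of `(l, x)` and `(m, y)`. -/
def tropComb {d : ℕ} (l m : ℝ) (x y : Fin d → ℝ) : Fin d → ℝ :=
  fun i => min (l + x i) (m + y i) - min l m

/-- A set is tropically convex if it is closed under tropical combinations. -/
def TropConvex {d : ℕ} (S : Set (Fin d → ℝ)) : Prop :=
  ∀ x ∈ S, ∀ y ∈ S, ∀ l m : ℝ, tropComb l m x y ∈ S

/-- The tropical convex hull: the intersection of all tropically convex supersets. -/
def tconv {d : ℕ} (V : Set (Fin d → ℝ)) : Set (Fin d → ℝ) :=
  ⋂₀ {S : Set (Fin d → ℝ) | TropConvex S ∧ V ⊆ S}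

/-- A tropical polytope is the tropical convex hull of a finite set. -/
def IsTropPolytope {d : ℕ} (P : Set (Fin d → ℝ)) : Prop :=
  ∃ V : Finset (Fin d → ℝ), P = tconv (V : Set (Fin d → ℝ))

/-- A polytrope is a tropical polytope which is also convex in the ordinary sense. -/
def IsPolytrope {d : ℕ} (P : Set (Fin d → ℝ)) : Prop :=
  IsTropPolytope P ∧ Convex ℝ P

/-- The closed tropical halfspace with apex `a` (with `a_0 := 0`) and type `I`:
the set of `x` with `min_{i ∈ I} (x_i - a_i) ≤ min_{j ∉ I} (x_j - a_j)`. -/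
def tropHalfspace {d : ℕ} (a : Fin d → ℝ) (I : Set (Fin (d + 1))) : Set (Fin d → ℝ) :=
  {x | ∀ j ∉ I, ∃ i ∈ I, ext x i - ext a i ≤ ext x j - ext a j}

/-- The tropical hyperplane with apex `a` (with `a_0 := 0`): the set of points where the
minimum `min_i (x_i - a_i)` is attained at least twice. -/
def tropHyperplane {d : ℕ} (a : Fin d → ℝ) : Set (Fin d → ℝ) :=
  {x | ∃ i j : Fin (d + 1), i ≠ j ∧
    (∀ k, ext x i - ext a i ≤ ext x k - ext a k) ∧
    ext x i - ext a i = ext x j - ext a j}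


section Coordinates

variable {d : ℕ}

@[simp] lemma ext_zero (x : Fin d → ℝ) : ext x 0 = 0 := rfl

@[simp] lemma ext_succ (x : Fin d → ℝ) (i : Fin d) : ext x i.succ = x i := rfl

lemma continuous_ext (l : Fin (d + 1)) : Continuous fun x : Fin d → ℝ => ext x l := by
  induction l using Fin.cases with
  | zero => exact continuous_const
  | succ i => exact continuous_apply i

lemma ext_tropComb (l m : ℝ) (x y : Fin d → ℝ) (i : Fin (d + 1)) :
    ext (tropComb l m x y) i = min (l + ext x i) (m + ext y i) - min l m := by
  induction i using Fin.cases with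
  | zero => simp
  | succ j => rfl

lemma ext_add (x y : Fin d → ℝ) (l : Fin (d + 1)) : ext (x + y) l = ext x l + ext y l := by
  induction l using Fin.cases with
  | zero => simp
  | succ i => rfl

/-- The point of `ℝ^d` with homogeneous coordinates `w`. -/
def dehomogenize (w : Fin (d + 1) → ℝ) : Fin d → ℝ := fun i => w i.succ - w 0

lemma ext_dehomogenize (w : Fin (d + 1) → ℝ) (l : Fin (d + 1)) :
    ext (dehomogenize w) l = w l - w 0 := by
  induction l using Fin.cases with
  | zero => simp
  | succ i => rfl

end Coordinates

section TropicalConvexity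

variable {d : ℕ}

lemma tropComb_eq_left {l m : ℝ} {x y : Fin d → ℝ} (hlm : l ≤ m) (hxy : ∀ i, l + x i ≤ m + y i) :
    tropComb l m x y = x := by
  funext i
  simp only [tropComb, min_eq_left hlm, min_eq_left (hxy i)]
  ring

lemma tropComb_comm (l m : ℝ) (x y : Fin d → ℝ) : tropComb l m x y = tropComb m l y x := by
  funext i
  simp only [tropComb, min_comm]

lemma tconv_subset {V S : Set (Fin d → ℝ)} (hS : TropConvex S) (hVS : V ⊆ S) : tconv V ⊆ S :=
  sInter_subset_of_mem ⟨hS, hVS⟩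

lemma TropConvex.iInter {ι : Sort*} {S : ι → Set (Fin d → ℝ)} (h : ∀ i, TropConvex (S i)) :
    TropConvex (⋂ i, S i) := by
  intro x hx y hy l m
  simp only [mem_iInter] at hx hy ⊢
  exact fun i => h i x (hx i) y (hy i) l m

lemma tropConvex_tropHalfspace (a : Fin d → ℝ) (I : Set (Fin (d + 1))) :
    TropConvex (tropHalfspace a I) := by
  intro x hx y hy l m j hj
  simp only [ext_tropComb]
  rcases le_total (l + ext x j) (m + ext y j) with h | h
  · obtain ⟨i, hiI, hi⟩ := hx j hj
    refine ⟨i, hiI, ?_⟩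
    rw [min_eq_left h]
    linarith [min_le_left (l + ext x i) (m + ext y i)]
  · obtain ⟨i, hiI, hi⟩ := hy j hj
    refine ⟨i, hiI, ?_⟩
    rw [min_eq_right h]
    linarith [min_le_right (l + ext x i) (m + ext y i)]

lemma TropConvex.inf'_sub_inf'_mem {S : Set (Fin d → ℝ)} (hS : TropConvex S) {ι : Type*}
    {s : Finset ι} (hs : s.Nonempty) (lam : ι → ℝ) {w : ι → Fin d → ℝ} (hw : ∀ k ∈ s, w k ∈ S) :
    (fun i => (s.inf' hs fun k => lam k + w k i) - s.inf' hs lam) ∈ S := by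
  induction hs using Finset.Nonempty.cons_induction with
  | singleton a => simpa using hw a (by simp)
  | cons a s ha hs ih =>
    have hcomb := hS (w a) (hw a (by simp)) _ (ih fun k hk => hw k (by simp [hk]))
      (lam a) (s.inf' hs lam)
    convert hcomb using 1
    funext i
    simp only [Finset.inf'_cons hs, tropComb, add_sub_cancel]

/-- The tropical segment `u ↦ tropComb u 0 x y` equals `x` for `u ≪ 0` and `y` for `u ≫ 0`. -/
lemma TropConvex.isPreconnected {P : Set (Fin d → ℝ)} (hP : TropConvex P) : IsPreconnected P := by
  refine isPreconnected_of_forall_pair fun x hx y hy => ⟨range fun u => tropComb u 0 x y,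
    ?_, ?_, ?_, isPreconnected_range (by unfold tropComb; fun_prop)⟩
  · rintro _ ⟨u, rfl⟩
    exact hP x hx y hy u 0
  · refine ⟨-(‖x‖ + ‖y‖), tropComb_eq_left (neg_nonpos.2 (by positivity)) fun i => ?_⟩
    linarith [abs_le.1 (norm_le_pi_norm x i), abs_le.1 (norm_le_pi_norm y i)]
  · refine ⟨‖x‖ + ‖y‖, ?_⟩
    change tropComb _ 0 x y = y
    rw [tropComb_comm]
    refine tropComb_eq_left (by positivity) fun i => ?_
    linarith [abs_le.1 (norm_le_pi_norm x i), abs_le.1 (norm_le_pi_norm y i)]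

end TropicalConvexity

lemma IsPreconnected.exists_subset_of_subset_iUnion {α ι : Type*} [TopologicalSpace α]
    {s : Set α} {U : ι → Set α} (hs : IsPreconnected s) (hne : s.Nonempty)
    (hU : ∀ i, IsOpen (U i)) (hsU : s ⊆ ⋃ i, U i)
    (hdisj : ∀ x ∈ s, ∀ i j, x ∈ U i → x ∈ U j → i = j) : ∃ i, s ⊆ U i := by
  obtain ⟨x, hx⟩ := hne
  obtain ⟨i, hxi⟩ := mem_iUnion.1 (hsU hx)
  have hsplit := isPreconnected_iff_subset_of_disjoint.1 hs (U i) (⋃ (j) (_ : j ≠ i), U j) (hU i)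
    (isOpen_biUnion fun j _ => hU j)
  refine ⟨i, (hsplit ?_ ?_).resolve_right fun hsub => ?_⟩
  · intro y hy
    obtain ⟨j, hyj⟩ := mem_iUnion.1 (hsU hy)
    by_cases hji : j = i
    · exact Or.inl (hji ▸ hyj)
    · exact Or.inr (mem_iUnion₂.2 ⟨j, hji, hyj⟩)
  · refine eq_empty_iff_forall_notMem.2 fun y ⟨hy, hyi, hyU⟩ => ?_
    obtain ⟨j, hji, hyj⟩ := mem_iUnion₂.1 hyU
    exact hji (hdisj y hy j i hyj hyi)
  · obtain ⟨j, hji, hxj⟩ := mem_iUnion₂.1 (hsub hx)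
    exact hji (hdisj x hx j i hxj hxi)

section Halfspaces

variable {d : ℕ}

lemma isClosed_tropHalfspace (a : Fin d → ℝ) (I : Set (Fin (d + 1))) :
    IsClosed (tropHalfspace a I) := by
  have : tropHalfspace a I =
      ⋂ (j) (_ : j ∉ I), ⋃ (i) (_ : i ∈ I), {x | ext x i - ext a i ≤ ext x j - ext a j} := by
    ext x
    simp [tropHalfspace]
  rw [this]
  refine isClosed_iInter fun j => isClosed_iInter fun _ => isClosed_iUnion_of_finite fun i =>
    isClosed_iUnion_of_finite fun _ => isClosed_le ?_ ?_ <;>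
  exact (continuous_ext _).sub continuous_const

lemma tropConvex_iInter_tropHalfspace {ι : Type*} (a : ι → Fin d → ℝ)
    (I : ι → Set (Fin (d + 1))) :
    TropConvex (⋂ m, tropHalfspace (a m) (I m)) :=
  TropConvex.iInter fun m => tropConvex_tropHalfspace (a m) (I m)

lemma isClosed_iInter_tropHalfspace {ι : Type*} (a : ι → Fin d → ℝ)
    (I : ι → Set (Fin (d + 1))) :
    IsClosed (⋂ m, tropHalfspace (a m) (I m)) :=
  isClosed_iInter fun m => isClosed_tropHalfspace (a m) (I m)

lemma exists_forall_sub_le_of_mem_tropHalfspace {a x : Fin d → ℝ} {I : Set (Fin (d + 1))}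
    (hx : x ∈ tropHalfspace a I) : ∃ i ∈ I, ∀ j ∉ I, ext x i - ext a i ≤ ext x j - ext a j := by
  obtain ⟨l, -, hl⟩ :=
    Finset.univ.exists_min_image (fun l => ext x l - ext a l) Finset.univ_nonempty
  by_cases hlI : l ∈ I
  · exact ⟨l, hlI, fun j _ => hl j (Finset.mem_univ j)⟩
  · obtain ⟨i, hiI, hi⟩ := hx l hlI
    exact ⟨i, hiI, fun j _ => hi.trans (hl j (Finset.mem_univ j))⟩

/-- Where `r` is the only index of `I` that can witness membership in `tropHalfspace a I`. -/
def tropLobe (a : Fin d → ℝ) (I : Set (Fin (d + 1))) (r : Fin (d + 1)) : Set (Fin d → ℝ) :=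
  {x | ∀ i ∈ I, i ≠ r → ∃ j ∉ I, ext x j - ext a j < ext x i - ext a i}

lemma isOpen_tropLobe (a : Fin d → ℝ) (I : Set (Fin (d + 1))) (r : Fin (d + 1)) :
    IsOpen (tropLobe a I r) := by
  have : tropLobe a I r = ⋂ (i) (_ : i ∈ I) (_ : i ≠ r),
      ⋃ (j) (_ : j ∉ I), {x | ext x j - ext a j < ext x i - ext a i} := by
    ext x
    simp [tropLobe]
  rw [this]
  refine isOpen_iInter_of_finite fun i => isOpen_iInter_of_finite fun _ =>
    isOpen_iInter_of_finite fun _ => isOpen_iUnion fun j => isOpen_iUnion fun _ =>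
    isOpen_lt ?_ ?_ <;>
  exact (continuous_ext _).sub continuous_const

lemma eq_of_forall_sub_le_of_mem_tropLobe {a x : Fin d → ℝ} {I : Set (Fin (d + 1))}
    {i r : Fin (d + 1)} (hi : i ∈ I) (hle : ∀ j ∉ I, ext x i - ext a i ≤ ext x j - ext a j)
    (hx : x ∈ tropLobe a I r) : i = r := by
  by_contra hir
  obtain ⟨j, hj, hlt⟩ := hx i hi hir
  exact (hle j hj).not_gt hlt

lemma mem_and_forall_sub_le_of_mem_tropLobe {a x : Fin d → ℝ} {I : Set (Fin (d + 1))}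
    {r : Fin (d + 1)} (hxH : x ∈ tropHalfspace a I) (hx : x ∈ tropLobe a I r) :
    r ∈ I ∧ ∀ j ∉ I, ext x r - ext a r ≤ ext x j - ext a j := by
  obtain ⟨i, hi, hle⟩ := exists_forall_sub_le_of_mem_tropHalfspace hxH
  obtain rfl := eq_of_forall_sub_le_of_mem_tropLobe hi hle hx
  exact ⟨hi, hle⟩

lemma eq_of_mem_tropLobe {a x : Fin d → ℝ} {I : Set (Fin (d + 1))} {r s : Fin (d + 1)}
    (hxH : x ∈ tropHalfspace a I) (hr : x ∈ tropLobe a I r) (hs : x ∈ tropLobe a I s) : r = s :=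
  have ⟨hrI, hle⟩ := mem_and_forall_sub_le_of_mem_tropLobe hxH hr
  eq_of_forall_sub_le_of_mem_tropLobe hrI hle hs

/-- `hxy` says that `y` is `x` with its `r`-th homogeneous coordinate raised. -/
lemma mem_tropLobe_of_notMem_tropHalfspace {a x y : Fin d → ℝ} {I : Set (Fin (d + 1))}
    {r : Fin (d + 1)} (hx : x ∈ tropHalfspace a I) (hy : y ∉ tropHalfspace a I)
    (hxy : ∀ i ≠ r, ∀ j, ext x j - ext x i ≤ ext y j - ext y i) :
    r ∈ I ∧ x ∈ tropLobe a I r := by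
  simp only [tropHalfspace, mem_ofPred_eq, not_forall, not_exists, not_and, not_le] at hy
  obtain ⟨j, hj, hlt⟩ := hy
  have hrI : r ∈ I := by
    by_contra hrI
    obtain ⟨i, hiI, hi⟩ := hx j hj
    have := hxy i (ne_of_mem_of_not_mem hiI hrI) j
    linarith [hlt i hiI]
  refine ⟨hrI, fun i hiI hir => ⟨j, hj, ?_⟩⟩
  linarith [hxy i hir j, hlt i hiI]

end Halfspaces

section Corners

variable {d : ℕ} {P : Set (Fin d → ℝ)}

/-- `max_{x ∈ P} (x_l - x_k)` in homogeneous coordinates; a junk value unless `P` is compact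
and nonempty. -/
def maxDiff (P : Set (Fin d → ℝ)) (l k : Fin (d + 1)) : ℝ :=
  sSup ((fun x => ext x l - ext x k) '' P)

def corner (P : Set (Fin d → ℝ)) (k : Fin (d + 1)) : Fin d → ℝ :=
  dehomogenize fun l => maxDiff P l k

lemma ext_corner (P : Set (Fin d → ℝ)) (k l : Fin (d + 1)) :
    ext (corner P k) l = maxDiff P l k - maxDiff P 0 k :=
  ext_dehomogenize _ l

lemma IsCompact.image_sub_ext (hP : IsCompact P) (l k : Fin (d + 1)) :
    IsCompact ((fun x => ext x l - ext x k) '' P) :=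
  hP.image ((continuous_ext l).sub (continuous_ext k))

lemma sub_le_maxDiff (hP : IsCompact P) {x : Fin d → ℝ} (hx : x ∈ P) (l k : Fin (d + 1)) :
    ext x l - ext x k ≤ maxDiff P l k :=
  le_csSup (hP.image_sub_ext l k).bddAbove (mem_image_of_mem _ hx)

lemma exists_sub_eq_maxDiff (hP : IsCompact P) (hne : P.Nonempty) (l k : Fin (d + 1)) :
    ∃ z ∈ P, ext z l - ext z k = maxDiff P l k :=
  (hP.image_sub_ext l k).sSup_mem (hne.image _)

lemma maxDiff_self (hne : P.Nonempty) (l : Fin (d + 1)) : maxDiff P l l = 0 := by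
  simp [maxDiff, hne.image_const]

lemma corner_sub_le (hP : IsCompact P) (hne : P.Nonempty) {i j : Fin (d + 1)} {b : ℝ}
    (h : ∀ y ∈ P, ext y i - ext y j ≤ b) (k : Fin (d + 1)) :
    ext (corner P k) i - ext (corner P k) j ≤ b := by
  obtain ⟨z, hz, hzeq⟩ := exists_sub_eq_maxDiff hP hne i k
  rw [ext_corner, ext_corner]
  linarith [h z hz, sub_le_maxDiff hP hz j k]

/-- `x ∈ P` is the tropical combination of the corners with coefficients `x_k + maxDiff P 0 k`. -/
lemma subset_tconv_range_corner (hP : IsCompact P) : P ⊆ tconv (range (corner P)) := by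
  intro x hx
  set lam : Fin (d + 1) → ℝ := fun k => ext x k + maxDiff P 0 k
  have hinf : ∀ l, Finset.univ.inf' Finset.univ_nonempty (fun k => lam k + ext (corner P k) l)
      = ext x l := by
    intro l
    refine le_antisymm ((Finset.inf'_le _ (Finset.mem_univ l)).trans_eq ?_)
      (Finset.le_inf' _ _ fun k _ => ?_)
    · simp [lam, ext_corner, maxDiff_self ⟨x, hx⟩]
    · simp only [lam, ext_corner]
      linarith [sub_le_maxDiff hP hx l k]
  have hx_eq : x = fun i => (Finset.univ.inf' Finset.univ_nonempty fun k => lam k + corner P k i)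
      - Finset.univ.inf' Finset.univ_nonempty lam := by
    funext i
    simpa using (congrArg₂ (· - ·) (hinf i.succ) (hinf 0)).symm
  exact mem_sInter.2 fun S ⟨hS, hVS⟩ =>
    hx_eq ▸ hS.inf'_sub_inf'_mem Finset.univ_nonempty lam fun k _ => hVS ⟨k, rfl⟩

end Corners

section Intersection

variable {d : ℕ}

lemma exists_abs_dehomogenize_single_eq (hd : d ≠ 0) (r : Fin (d + 1)) (t : ℝ) :
    ∃ i, |dehomogenize (Pi.single r t : Fin (d + 1) → ℝ) i| = |t| := by
  induction r using Fin.cases with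
  | zero => exact ⟨⟨0, Nat.pos_of_ne_zero hd⟩, by simp [dehomogenize]⟩
  | succ i => exact ⟨i, by simp [dehomogenize]⟩

lemma sub_le_sub_ext_add_dehomogenize_single (x : Fin d → ℝ) {r i : Fin (d + 1)} {t : ℝ}
    (ht : 0 ≤ t) (hir : i ≠ r) (j : Fin (d + 1)) :
    ext x j - ext x i ≤ ext (x + dehomogenize (Pi.single r t)) j
      - ext (x + dehomogenize (Pi.single r t)) i := by
  simp only [ext_add, ext_dehomogenize, Pi.single_eq_of_ne hir]
  have hj : 0 ≤ (Pi.single r t : Fin (d + 1) → ℝ) j := by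
    rw [Pi.single_apply]; split_ifs <;> simp [ht]
  linarith

lemma exists_notMem_ray_of_isBounded (hd : d ≠ 0) {P : Set (Fin d → ℝ)}
    (hP : Bornology.IsBounded P) (x : Fin d → ℝ) (r : Fin (d + 1)) :
    ∃ t ≥ (0 : ℝ), x + dehomogenize (Pi.single r t) ∉ P := by
  obtain ⟨R, hR⟩ := hP.subset_closedBall x
  obtain ⟨i, hi⟩ := exists_abs_dehomogenize_single_eq hd r (|R| + 1)
  refine ⟨|R| + 1, by positivity, fun hmem => ?_⟩
  set v : Fin d → ℝ := dehomogenize (Pi.single r (|R| + 1))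
  have hdist : |R| + 1 ≤ dist (x + v) x :=
    calc |R| + 1 = ‖v i‖ := by
          rw [Real.norm_eq_abs, hi, abs_of_pos (by positivity : (0 : ℝ) < |R| + 1)]
      _ ≤ ‖v‖ := norm_le_pi_norm v i
      _ = dist (x + v) x := by rw [dist_eq_norm, add_sub_cancel_left]
  linarith [Metric.mem_closedBall.1 (hR hmem), le_abs_self R]

/-- Push `x` along the `r`-th ray until it leaves the bounded intersection. -/
lemma exists_mem_tropLobe_of_isBounded {ι : Type*} {a : ι → Fin d → ℝ}
    {I : ι → Set (Fin (d + 1))} (hd : d ≠ 0)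
    (hbd : Bornology.IsBounded (⋂ m, tropHalfspace (a m) (I m)))
    {x : Fin d → ℝ} (hx : x ∈ ⋂ m, tropHalfspace (a m) (I m)) (r : Fin (d + 1)) :
    ∃ m, r ∈ I m ∧ x ∈ tropLobe (a m) (I m) r := by
  obtain ⟨t, ht, hout⟩ := exists_notMem_ray_of_isBounded hd hbd x r
  obtain ⟨m, hm⟩ := not_forall.1 (mt mem_iInter.2 hout)
  exact ⟨m, mem_tropLobe_of_notMem_tropHalfspace (mem_iInter.1 hx m) hm
    fun i hir => sub_le_sub_ext_add_dehomogenize_single x ht hir⟩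

/-- Distinct `r` give distinct halfspaces above, so with `d + 1` halfspaces each one occurs. -/
lemma mem_iUnion_tropLobe_of_isBounded {a : Fin (d + 1) → Fin d → ℝ}
    {I : Fin (d + 1) → Set (Fin (d + 1))} (hd : d ≠ 0)
    (hbd : Bornology.IsBounded (⋂ m, tropHalfspace (a m) (I m)))
    {x : Fin d → ℝ} (hx : x ∈ ⋂ m, tropHalfspace (a m) (I m)) (m : Fin (d + 1)) :
    x ∈ ⋃ r, tropLobe (a m) (I m) r := by
  choose g _ hg using exists_mem_tropLobe_of_isBounded hd hbd hx
  have hinj : Function.Injective g := fun r s hrs =>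
    eq_of_mem_tropLobe (mem_iInter.1 hx (g s)) (hrs ▸ hg r) (hg s)
  obtain ⟨r, rfl⟩ := Finite.injective_iff_surjective.1 hinj m
  exact mem_iUnion.2 ⟨r, hg r⟩

/-- The lobes of the `m`-th halfspace are open and disjoint on the intersection, which is
connected. -/
lemma exists_forall_sub_le_of_isBounded {a : Fin (d + 1) → Fin d → ℝ}
    {I : Fin (d + 1) → Set (Fin (d + 1))} (hd : d ≠ 0)
    (hbd : Bornology.IsBounded (⋂ m, tropHalfspace (a m) (I m)))
    (hne : (⋂ m, tropHalfspace (a m) (I m)).Nonempty) (m : Fin (d + 1)) :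
    ∃ r ∈ I m, ∀ y ∈ ⋂ n, tropHalfspace (a n) (I n), ∀ j ∉ I m,
      ext y r - ext (a m) r ≤ ext y j - ext (a m) j := by
  obtain ⟨r, hr⟩ :=
    (tropConvex_iInter_tropHalfspace a I).isPreconnected.exists_subset_of_subset_iUnion hne
    (isOpen_tropLobe (a m) (I m))
    (fun y hy => mem_iUnion_tropLobe_of_isBounded hd hbd hy m)
    fun y hy _ _ => eq_of_mem_tropLobe (mem_iInter.1 hy m)
  obtain ⟨y, hy⟩ := hne
  exact ⟨r, (mem_and_forall_sub_le_of_mem_tropLobe (mem_iInter.1 hy m) (hr hy)).1,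
    fun z hz => (mem_and_forall_sub_le_of_mem_tropLobe (mem_iInter.1 hz m) (hr hz)).2⟩

lemma corner_mem_iInter_tropHalfspace {a : Fin (d + 1) → Fin d → ℝ}
    {I : Fin (d + 1) → Set (Fin (d + 1))} (hd : d ≠ 0)
    (hbd : Bornology.IsBounded (⋂ m, tropHalfspace (a m) (I m)))
    (hne : (⋂ m, tropHalfspace (a m) (I m)).Nonempty) (k : Fin (d + 1)) :
    corner (⋂ m, tropHalfspace (a m) (I m)) k ∈ ⋂ m, tropHalfspace (a m) (I m) := by
  have hcpt := Metric.isCompact_of_isClosed_isBounded (isClosed_iInter_tropHalfspace a I) hbd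
  refine mem_iInter.2 fun m j hj => ?_
  obtain ⟨r, hrI, hr⟩ := exists_forall_sub_le_of_isBounded hd hbd hne m
  have := corner_sub_le hcpt hne (i := r) (j := j) (b := ext (a m) r - ext (a m) j)
    (fun y hy => by linarith [hr y hy j hj]) k
  exact ⟨r, hrI, by linarith⟩

end Intersection

theorem bounded_intersection_of_halfspaces_is_tropical_simplex_general {d : ℕ}
    (a : Fin (d + 1) → Fin d → ℝ) (I : Fin (d + 1) → Set (Fin (d + 1)))
    (P : Set (Fin d → ℝ)) (hP : P = ⋂ m, tropHalfspace (a m) (I m))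
    (hbd : Bornology.IsBounded P)
    (hhyp : ∀ b : Fin d → ℝ, ¬P ⊆ tropHyperplane b) :
    ∃ v : Fin (d + 1) → Fin d → ℝ, P = tconv (Set.range v) := by
  have hne : P.Nonempty := nonempty_iff_ne_empty.2 fun h => hhyp 0 (h ▸ empty_subset _)
  subst hP
  have hcpt := Metric.isCompact_of_isClosed_isBounded (isClosed_iInter_tropHalfspace a I) hbd
  refine ⟨corner _, (subset_tconv_range_corner hcpt).antisymm
    (tconv_subset (tropConvex_iInter_tropHalfspace a I) ?_)⟩
  rintro _ ⟨k, rfl⟩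
  rcases eq_or_ne d 0 with rfl | hd
  · obtain ⟨x, hx⟩ := hne
    exact Subsingleton.elim x (corner _ k) ▸ hx
  · exact corner_mem_iInter_tropHalfspace hd hbd hne k

/-- If `P ⊆ ℝ^d` is the intersection of `d+1` closed tropical halfspaces,
is bounded, and is not contained in any tropical hyperplane,
then `P` is the tropical convex hull of some `d+1` points. -/
theorem bounded_intersection_of_halfspaces_is_tropical_simplex {d : ℕ}
    (a : Fin (d + 1) → Fin d → ℝ) (I : Fin (d + 1) → Set (Fin (d + 1)))
    (hne : ∀ m, (I m).Nonempty) (hprop : ∀ m, I m ≠ Set.univ)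
    (P : Set (Fin d → ℝ)) (hP : P = ⋂ m, tropHalfspace (a m) (I m))
    (hbd : Bornology.IsBounded P)
    (hhyp : ∀ b : Fin d → ℝ, ¬P ⊆ tropHyperplane b) :
    ∃ v : Fin (d + 1) → Fin d → ℝ, P = tconv (Set.range v) :=
  bounded_intersection_of_halfspaces_is_tropical_simplex_general a I P hP hbd hhyp
end
end

section
/- Let n ≥ 3 and let A ⊆ ℝ^{n−2} be the set of all points with coordinates (x_2, …, x_{n−1}) such that, setting x_1 := 0 and x_n := (n−1)², the inequalities x_j − x_i ≥ (i−j)² hold for all 1 ≤ i < j ≤ n. Then A (the Rote–Santos–Streinu realization Assoc_{n−2} of the (n−2)-dimensional associahedron) is a polytrope of affine dimension n−2; in particular, A is tropically convex (with respect to the identification of ℝ^{n−2} with TA^{n−2} in which the fixed coordinate x_1 = 0 plays the role of the normalized 0-th coordinate) and A is a tropical polytope. -/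
open Set

noncomputable section

/-- The full coordinate vector `(x_1, …, x_n)` (for `n = d + 2`) of a point
`y = (x_2, …, x_{n-1}) ∈ ℝ^{n-2}`, where `x_1 := 0` and `x_n := (n-1)^2`. -/
def assocCoords (d : ℕ) (y : Fin d → ℝ) : Fin (d + 2) → ℝ :=
  Fin.cons 0 (Fin.snoc y (((d : ℝ) + 1) ^ 2))

/-- The Rote–Santos–Streinu realization `Assoc_{n-2} ⊆ ℝ^{n-2}` (here `n = d + 2`, `d ≥ 1`)
of the associahedron: all `(x_2, …, x_{n-1})` such that, with `x_1 := 0` and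
`x_n := (n-1)^2`, one has `x_j - x_i ≥ (i - j)^2` for all `1 ≤ i < j ≤ n`. -/
def Assoc (d : ℕ) : Set (Fin d → ℝ) :=
  {y | ∀ i j : Fin (d + 2), (i : ℕ) < (j : ℕ) →
    ((i : ℝ) - (j : ℝ)) ^ 2 ≤ assocCoords d y j - assocCoords d y i}

/-! Both kinds of convexity hold because `Assoc` is cut out by difference inequalities
`x_k - x_i ≥ c`: min-plus combinations as well as convex combinations preserve them.
Writing `x_0, …, x_{d+1}` for the full coordinates, every point `y ∈ Assoc` is the tropical
combination `y = min_j (λ_j + g_j)` with `λ_j = x_j - j²`, where `g_j` is the largest point of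
`Assoc` with `x_j = j²`; so `Assoc` is the tropical hull of the `d + 1` points `g_j`.
Full-dimensionality comes from a point at which every non-trivial inequality is strict. -/

theorem Fin.eq_zero_or_eq_last_or_eq_castSucc_succ {n : ℕ} (k : Fin (n + 2)) :
    k = 0 ∨ k = Fin.last (n + 1) ∨ ∃ i : Fin n, k = i.castSucc.succ := by
  rcases Fin.eq_zero_or_eq_succ k with rfl | ⟨j, rfl⟩
  · exact Or.inl rfl
  rcases Fin.eq_castSucc_or_eq_last j with ⟨i, rfl⟩ | rfl
  · exact Or.inr (Or.inr ⟨i, rfl⟩)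
  · exact Or.inr (Or.inl (Fin.succ_last n))

section Coordinates

variable {d : ℕ}

@[simp]
lemma assocCoords_zero (y : Fin d → ℝ) : assocCoords d y 0 = 0 := rfl

@[simp]
lemma assocCoords_last (y : Fin d → ℝ) :
    assocCoords d y (Fin.last (d + 1)) = ((d : ℝ) + 1) ^ 2 := by
  rw [← Fin.succ_last, assocCoords, Fin.cons_succ, Fin.snoc_last]

@[simp]
lemma assocCoords_castSucc_succ (y : Fin d → ℝ) (i : Fin d) :
    assocCoords d y i.castSucc.succ = y i := by
  rw [assocCoords, Fin.cons_succ, Fin.snoc_castSucc]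

lemma assocCoords_map₂ (φ : ℝ → ℝ → ℝ) (h0 : φ 0 0 = 0)
    (hlast : φ (((d : ℝ) + 1) ^ 2) (((d : ℝ) + 1) ^ 2) = ((d : ℝ) + 1) ^ 2)
    (x y : Fin d → ℝ) (k : Fin (d + 2)) :
    assocCoords d (fun i => φ (x i) (y i)) k = φ (assocCoords d x k) (assocCoords d y k) := by
  rcases k.eq_zero_or_eq_last_or_eq_castSucc_succ with rfl | rfl | ⟨i, rfl⟩ <;>
    simp only [assocCoords_zero, assocCoords_last, assocCoords_castSucc_succ, h0, hlast]

lemma continuous_assocCoords : Continuous (assocCoords d) :=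
  continuous_const.finCons (continuous_id.finSnoc (A := fun _ => ℝ) continuous_const)

end Coordinates

lemma le_min_add_sub_min_add {a b a' b' c : ℝ} (l m : ℝ) (ha : c ≤ a - a') (hb : c ≤ b - b') :
    c ≤ min (l + a) (m + b) - min (l + a') (m + b') := by
  have : min (l + a') (m + b') + c ≤ min (l + a) (m + b) := by
    rw [← min_add_add_right]
    exact min_le_min (by linarith) (by linarith)
  linarith

lemma tropConvex_assoc (d : ℕ) : TropConvex (Assoc d) := by
  intro x hx y hy l m i k hik
  have hcoords : ∀ k, assocCoords d (tropComb l m x y) k =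
      min (l + assocCoords d x k) (m + assocCoords d y k) - min l m :=
    assocCoords_map₂ (fun a b => min (l + a) (m + b) - min l m) (by simp)
      (by simp only [min_add_add_right]; ring) x y
  rw [hcoords, hcoords]
  linarith [le_min_add_sub_min_add l m (hx i k hik) (hy i k hik)]

lemma convex_assoc (d : ℕ) : Convex ℝ (Assoc d) := by
  intro x hx y hy a b ha hb hab i k hik
  have hcoords : ∀ k, assocCoords d (a • x + b • y) k =
      a * assocCoords d x k + b * assocCoords d y k :=
    assocCoords_map₂ (fun u v => a * u + b * v) (by simp)
      (by linear_combination (((d : ℝ) + 1) ^ 2) * hab) x y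
  rw [hcoords, hcoords]
  nlinarith [mul_le_mul_of_nonneg_left (hx i k hik) ha, mul_le_mul_of_nonneg_left (hy i k hik) hb]

section TropicalHull

variable {d : ℕ}

lemma tropConvex_tconv (V : Set (Fin d → ℝ)) : TropConvex (tconv V) :=
  fun _ hx _ hy l m _ hS => hS.1 _ (hx _ hS) _ (hy _ hS) l m

lemma subset_tconv (V : Set (Fin d → ℝ)) : V ⊆ tconv V :=
  fun _ hv _ hS => hS.2 hv

lemma tconv_min {V S : Set (Fin d → ℝ)} (hVS : V ⊆ S) (hS : TropConvex S) : tconv V ⊆ S :=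
  fun _ hx => hx S ⟨hS, hVS⟩

lemma TropConvex.inf'_mem {S : Set (Fin d → ℝ)} (hS : TropConvex S) {ι : Type*} {s : Finset ι}
    (hs : s.Nonempty) (lam : ι → ℝ) (v : ι → Fin d → ℝ) (hv : ∀ j ∈ s, v j ∈ S) :
    (fun i => s.inf' hs (fun j => lam j + v j i) - s.inf' hs lam) ∈ S := by
  induction hs using Finset.Nonempty.cons_induction with
  | singleton a =>
    simpa only [Finset.inf'_singleton, add_sub_cancel_left] using hv a (Finset.mem_singleton_self a)
  | cons a s ha hs ih =>
    have hmem := hS (v a) (hv a (Finset.mem_cons_self a s)) _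
      (ih fun j hj => hv j (Finset.mem_cons_of_mem hj)) (lam a) (s.inf' hs lam)
    convert hmem using 2 with i
    simp only [tropComb, Finset.inf'_cons hs, add_sub_cancel]

end TropicalHull

/-- The full coordinate `x_k` (`0 ≤ k ≤ d + 1`) of the generator `g_j`. -/
def genCoord (d j k : ℕ) : ℝ :=
  if k ≤ j then (j : ℝ) ^ 2 - ((j : ℝ) - k) ^ 2 else ((d : ℝ) + 1) ^ 2 - ((d : ℝ) + 1 - k) ^ 2

def assocGen (d : ℕ) (j : Fin (d + 1)) : Fin d → ℝ := fun i => genCoord d j ((i : ℕ) + 1)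

section Generators

variable {d : ℕ}

lemma assocCoords_assocGen (j : Fin (d + 1)) (k : Fin (d + 2)) :
    assocCoords d (assocGen d j) k = genCoord d j k := by
  rcases k.eq_zero_or_eq_last_or_eq_castSucc_succ with rfl | rfl | ⟨i, rfl⟩
  · simp [genCoord]
  · have : ¬ d + 1 ≤ (j : ℕ) := by omega
    simp [genCoord, this]
  · rw [assocCoords_castSucc_succ]
    rfl

lemma assocGen_mem (j : Fin (d + 1)) : assocGen d j ∈ Assoc d := by
  intro i k hik
  rw [assocCoords_assocGen, assocCoords_assocGen]
  have hk : (k : ℕ) ≤ d + 1 := by omega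
  have hj : (j : ℕ) ≤ d := by omega
  have hik' : ((i : ℕ) : ℝ) + 1 ≤ (k : ℕ) := by exact_mod_cast hik
  have hk' : ((k : ℕ) : ℝ) ≤ d + 1 := by exact_mod_cast hk
  have hj' : ((j : ℕ) : ℝ) ≤ d := by exact_mod_cast hj
  unfold genCoord
  split_ifs with hkj hij hij
  · have : ((k : ℕ) : ℝ) ≤ (j : ℕ) := by exact_mod_cast hkj
    nlinarith
  · omega
  · have : ((i : ℕ) : ℝ) ≤ (j : ℕ) := by exact_mod_cast hij
    have : ((j : ℕ) : ℝ) + 1 ≤ (k : ℕ) := by exact_mod_cast (by omega : (j : ℕ) + 1 ≤ k)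
    nlinarith
  · nlinarith

end Generators

section Decomposition

variable {d : ℕ} {y : Fin d → ℝ}

lemma sq_le_assocCoords (hy : y ∈ Assoc d) (k : Fin (d + 2)) :
    ((k : ℕ) : ℝ) ^ 2 ≤ assocCoords d y k := by
  rcases Nat.eq_zero_or_pos (k : ℕ) with hk | hk
  · simp [show k = 0 from Fin.ext hk]
  · simpa using hy 0 k hk

lemma assocCoords_le (hy : y ∈ Assoc d) (k : Fin (d + 2)) :
    assocCoords d y k ≤ ((d : ℝ) + 1) ^ 2 - ((d : ℝ) + 1 - (k : ℕ)) ^ 2 := by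
  rcases (Fin.le_last k).lt_or_eq with hk | rfl
  · have := hy k (Fin.last _) hk
    simp only [assocCoords_last, Fin.val_last, Nat.cast_add, Nat.cast_one] at this
    nlinarith
  · simp

lemma assocCoords_le_add_genCoord (hy : y ∈ Assoc d) (j : Fin (d + 1)) (k : Fin (d + 2)) :
    assocCoords d y k ≤ assocCoords d y j.castSucc - ((j : ℕ) : ℝ) ^ 2 + genCoord d j k := by
  unfold genCoord
  split_ifs with hkj
  · rcases hkj.lt_or_eq with hkj | hkj
    · have := hy k j.castSucc hkj
      simp only [Fin.val_castSucc] at this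
      linarith
    · rw [show k = j.castSucc from Fin.ext hkj]
      simp
  · have := sq_le_assocCoords hy j.castSucc
    rw [Fin.val_castSucc] at this
    linarith [assocCoords_le hy k]

lemma mem_tconv_assocGen (hy : y ∈ Assoc d) : y ∈ tconv (range (assocGen d)) := by
  set lam : Fin (d + 1) → ℝ := fun j => assocCoords d y j.castSucc - ((j : ℕ) : ℝ) ^ 2
  have hmem := (tropConvex_tconv _).inf'_mem Finset.univ_nonempty lam (assocGen d)
    fun j _ => subset_tconv _ (mem_range_self j)
  have hlam : Finset.univ.inf' Finset.univ_nonempty lam = 0 := by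
    refine le_antisymm ((Finset.inf'_le _ (Finset.mem_univ 0)).trans (by simp [lam])) ?_
    exact Finset.le_inf' _ _ fun j _ => sub_nonneg.2 (sq_le_assocCoords hy j.castSucc)
  convert hmem using 1
  funext i
  rw [hlam, sub_zero]
  refine le_antisymm ?_ ((Finset.inf'_le _ (Finset.mem_univ i.succ)).trans ?_)
  · refine Finset.le_inf' _ _ fun j _ => ?_
    simpa [lam, assocGen] using assocCoords_le_add_genCoord hy j i.castSucc.succ
  · simp [lam, assocGen, genCoord]

end Decomposition

lemma isTropPolytope_assoc (d : ℕ) : IsTropPolytope (Assoc d) := by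
  refine ⟨Finset.univ.image (assocGen d), ?_⟩
  rw [Finset.coe_image, Finset.coe_univ, image_univ]
  exact Subset.antisymm (fun _ => mem_tconv_assocGen) (tconv_min (range_subset_iff.2 assocGen_mem)
    (tropConvex_assoc d))

/-- Every defining inequality of `Assoc d` except the one between `x_0` and `x_{d+1}` (which
holds on all of `ℝ^d`) is strict at this point. -/
def assocCenter (d : ℕ) : Fin d → ℝ := fun i => ((i : ℕ) + 1) * ((d : ℝ) + 1)

lemma assocCoords_assocCenter {d : ℕ} (k : Fin (d + 2)) :
    assocCoords d (assocCenter d) k = (k : ℕ) * ((d : ℝ) + 1) := by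
  rcases k.eq_zero_or_eq_last_or_eq_castSucc_succ with rfl | rfl | ⟨i, rfl⟩
  · simp
  · simp only [assocCoords_last, Fin.val_last]
    push_cast
    ring
  · simp [assocCenter]

lemma assocCenter_mem_interior (d : ℕ) : assocCenter d ∈ interior (Assoc d) := by
  rw [mem_interior_iff_mem_nhds]
  change ∀ᶠ y in nhds (assocCenter d), ∀ i k : Fin (d + 2), _
  simp only [Filter.eventually_all]
  intro i k hik
  by_cases htrivial : i = 0 ∧ k = Fin.last (d + 1)
  · obtain ⟨rfl, rfl⟩ := htrivial
    exact Filter.Eventually.of_forall fun y => le_of_eq (by simp; ring)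
  have hcont : Continuous fun y => assocCoords d y k - assocCoords d y i :=
    ((continuous_apply k).comp continuous_assocCoords).sub
      ((continuous_apply i).comp continuous_assocCoords)
  refine (continuousAt_const.eventually_lt hcont.continuousAt ?_).mono fun y hy => hy.le
  rw [assocCoords_assocCenter, assocCoords_assocCenter]
  have hlt : (k : ℕ) ≤ i + d := by
    have : (i : ℕ) ≠ 0 ∨ (k : ℕ) ≠ d + 1 := by
      by_contra! h
      exact htrivial ⟨Fin.ext h.1, Fin.ext h.2⟩
    omega
  have hik' : ((i : ℕ) : ℝ) + 1 ≤ (k : ℕ) := by exact_mod_cast hik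
  have hlt' : ((k : ℕ) : ℝ) ≤ (i : ℕ) + d := by exact_mod_cast hlt
  nlinarith

lemma affineSpan_assoc (d : ℕ) : affineSpan ℝ (Assoc d) = ⊤ :=
  affineSpan_eq_top_of_nonempty_interior
    ⟨_, interior_mono (subset_convexHull ℝ _) (assocCenter_mem_interior d)⟩

theorem associahedron_is_polytrope_general (d : ℕ) :
    IsPolytrope (Assoc d) ∧ affineSpan ℝ (Assoc d) = ⊤ ∧
      TropConvex (Assoc d) ∧ IsTropPolytope (Assoc d) :=
  ⟨⟨isTropPolytope_assoc d, convex_assoc d⟩, affineSpan_assoc d, tropConvex_assoc d,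
    isTropPolytope_assoc d⟩

/-- For `n = d + 2 ≥ 3`, the associahedron realization `Assoc_{n-2}` is a
polytrope of affine dimension `n - 2`; in particular it is tropically convex and a
tropical polytope. -/
theorem associahedron_is_polytrope (d : ℕ) (hd : 1 ≤ d) :
    IsPolytrope (Assoc d) ∧ affineSpan ℝ (Assoc d) = ⊤ ∧
      TropConvex (Assoc d) ∧ IsTropPolytope (Assoc d) :=
  associahedron_is_polytrope_general d
end
end
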